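/- Under the noise model, the number of positive edges of G with both endpoints in S equals |E(G[S])| − |S| + 1, the first Betti number of the induced subgraph G[S] (here |E(G[S])| is the number of edges of G with both endpoints in S). -/

import Mathlib

open SimpleGraph

/-- The function value of an edge: the larger of the values of its two endpoints. -/
noncomputable def fbar {V : Type*} (f : V → ℝ) : Sym2 V → ℝ :=
  Sym2.lift ⟨fun u w => max (f u) (f w), fun u w => max_comm (f u) (f w)⟩

/-- The spanning subgraph `G_{≺e}` of `G` whose edges are exactly the edges `e'` of `G`
with `e' ≺ e`. -/
def Gbelow {V : Type*} (G : SimpleGraph V) (lt : Sym2 V → Sym2 V → Prop) (e : Sym2 V) :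
    SimpleGraph V :=
  SimpleGraph.fromEdgeSet {e' | e' ∈ G.edgeSet ∧ lt e' e}

/-- An edge `e` of `G` is negative if its two endpoints lie in different connected
components of `G_{≺e}`. -/
def IsNegEdge {V : Type*} (G : SimpleGraph V) (lt : Sym2 V → Sym2 V → Prop) (e : Sym2 V) :
    Prop :=
  e ∈ G.edgeSet ∧ ∃ u w : V, e = s(u, w) ∧ ¬ (Gbelow G lt e).Reachable u w

/-- An edge `e` of `G` is positive if it is not negative. -/
def IsPosEdge {V : Type*} (G : SimpleGraph V) (lt : Sym2 V → Sym2 V → Prop) (e : Sym2 V) :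
    Prop :=
  e ∈ G.edgeSet ∧ ¬ IsNegEdge G lt e

/-- The `f`-minimizing vertex of the connected component of `u` in the graph `H`. -/
noncomputable def compMin {V : Type*} [Fintype V] (f : V → ℝ) (H : SimpleGraph V) (u : V) :
    V := by
  classical
  exact Classical.choose (Finset.exists_min_image
    (Finset.univ.filter fun v => H.Reachable u v) f
    ⟨u, Finset.mem_filter.mpr ⟨Finset.mem_univ u, SimpleGraph.Reachable.refl u⟩⟩)

/-- The vertex `m(e)` paired with a negative edge `e` by the elder rule: of the two
`f`-minimizing vertices of the components (in `G_{≺e}`) of the endpoints of `e`, the one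
with the larger `f`-value. -/
noncomputable def pairVert {V : Type*} [Fintype V] (G : SimpleGraph V) (f : V → ℝ)
    (hf : Function.Injective f) (lt : Sym2 V → Sym2 V → Prop) (e : Sym2 V) : V :=
  Sym2.lift ⟨fun u w =>
      if f (compMin f (Gbelow G lt e) u) < f (compMin f (Gbelow G lt e) w)
      then compMin f (Gbelow G lt e) w
      else compMin f (Gbelow G lt e) u, by
    intro u w
    dsimp only
    rcases lt_trichotomy (f (compMin f (Gbelow G lt e) u)) (f (compMin f (Gbelow G lt e) w))
      with h | h | h
    · rw [if_pos h, if_neg (lt_asymm h)]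
    · rw [hf h]
    · rw [if_neg (lt_asymm h), if_pos h]⟩ e

/-- The persistence of a negative edge `e`: `f̄(e) - f(m(e))`. -/
noncomputable def persE {V : Type*} [Fintype V] (G : SimpleGraph V) (f : V → ℝ)
    (hf : Function.Injective f) (lt : Sym2 V → Sym2 V → Prop) (e : Sym2 V) : ℝ :=
  fbar f e - f (pairVert G f hf lt e)

/-!
Let `N` be the graph of negative edges. A negative edge joins two components of the graph of
earlier edges, so `N` is a forest: the `≺`-largest edge of a cycle of `N` would be positive,
its endpoints being joined by the rest of the cycle. Under the noise model `S` is the sublevel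
set `{f < -ν}`, so the edges inside `S` form an initial segment of `≺`; by induction along `≺`
the endpoints of every edge inside `S` are then joined by negative edges inside `S`. Hence the
negative edges inside `S` form a spanning tree of `G[S]`: there are `|S| - 1` of them, and the
other `|E(G[S])| - |S| + 1` edges inside `S` are positive.
-/

structure IsStrictOrderOn {α : Type*} (s : Set α) (r : α → α → Prop) : Prop where
  irrefl : ∀ a ∈ s, ¬ r a a
  trans : ∀ a ∈ s, ∀ b ∈ s, ∀ c ∈ s, r a b → r b c → r a c

namespace IsStrictOrderOn

variable {α : Type*} {s : Set α} {r : α → α → Prop}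

theorem swap (h : IsStrictOrderOn s r) : IsStrictOrderOn s (Function.swap r) :=
  ⟨h.irrefl, fun a ha b hb c hc hab hbc => h.trans c hc b hb a ha hbc hab⟩

theorem wellFounded [Finite α] (h : IsStrictOrderOn s r) :
    WellFounded fun a b => a ∈ s ∧ b ∈ s ∧ r a b :=
  have : IsTrans α fun a b => a ∈ s ∧ b ∈ s ∧ r a b :=
    ⟨fun a b c ⟨ha, hb, hab⟩ ⟨_, hc, hbc⟩ => ⟨ha, hc, h.trans a ha b hb c hc hab hbc⟩⟩
  have : Std.Irrefl fun a b => a ∈ s ∧ b ∈ s ∧ r a b := ⟨fun a ⟨ha, _, haa⟩ => h.irrefl a ha haa⟩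
  Finite.wellFounded_of_trans_of_irrefl _

theorem exists_forall_lt [Finite α] (h : IsStrictOrderOn s r)
    (htotal : ∀ a ∈ s, ∀ b ∈ s, a ≠ b → r a b ∨ r b a) {t : Set α} (hts : t ⊆ s)
    (ht : t.Nonempty) : ∃ m ∈ t, ∀ a ∈ t, a ≠ m → r a m := by
  obtain ⟨m, hm, hmax⟩ := h.swap.wellFounded.has_min t ht
  refine ⟨m, hm, fun a ha ham => ?_⟩
  refine (htotal a (hts ha) m (hts hm) ham).resolve_right fun hma => ?_
  exact hmax a ha ⟨hts ha, hts hm, hma⟩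

end IsStrictOrderOn

namespace SimpleGraph

theorem Reachable.of_forall_adj {V : Type*} {G H : SimpleGraph V}
    (h : ∀ ⦃x y⦄, G.Adj x y → H.Reachable x y) {u v : V} (huv : G.Reachable u v) :
    H.Reachable u v := by
  rw [reachable_iff_reflTransGen] at huv ⊢
  exact Relation.ReflTransGen.lift' id
    (fun x y hxy => (reachable_iff_reflTransGen x y).1 (h hxy)) u v huv

theorem Reachable.subtype_of_forall_adj {V : Type*} {G : SimpleGraph V} {S : Set V}
    {H : SimpleGraph S}
    (h : ∀ ⦃x y⦄, G.Adj x y → ∃ (hx : x ∈ S) (hy : y ∈ S), H.Reachable ⟨x, hx⟩ ⟨y, hy⟩)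
    {a b : S} (hab : G.Reachable a b) : H.Reachable a b := by
  suffices ∀ {u v : V} (p : G.Walk u v) (hu : u ∈ S) (hv : v ∈ S),
      H.Reachable ⟨u, hu⟩ ⟨v, hv⟩ from hab.elim fun p => this p a.2 b.2
  intro u v p
  induction p with
  | nil => exact fun _ _ => Reachable.rfl
  | cons hadj _ ih =>
    intro _ hv
    obtain ⟨_, hx, hr⟩ := h hadj
    exact hr.trans (ih hx hv)

theorem Walk.IsCycle.reachable_of_mem_edges {V : Type*} {G : SimpleGraph V} {x u w : V}
    {c : G.Walk x x} (hc : c.IsCycle) (he : s(u, w) ∈ c.edges) :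
    (fromEdgeSet ({e | e ∈ c.edges} \ {s(u, w)})).Reachable u w := by
  have hsub : ∀ e ∈ c.edges, e ∈ (fromEdgeSet {e | e ∈ c.edges}).edgeSet := fun e he' => by
    rw [edgeSet_fromEdgeSet]
    exact ⟨he', G.not_isDiag_of_mem_edgeSet (c.edges_subset_edgeSet he')⟩
  rw [fromEdgeSet_sdiff]
  exact (adj_and_reachable_delete_edges_iff_exists_cycle.mpr
    ⟨x, c.transfer _ hsub, hc.transfer hsub, by rwa [Walk.edges_transfer]⟩).2

theorem ncard_edgeSet_induce {V : Type*} (G : SimpleGraph V) (S : Set V) :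
    (G.induce S).edgeSet.ncard = {e | e ∈ G.edgeSet ∧ ∀ v ∈ e, v ∈ S}.ncard := by
  rw [← Set.ncard_image_of_injective _ (Sym2.map.injective Subtype.val_injective)]
  congr 1
  ext e
  induction e with
  | _ u w =>
    simp only [Set.mem_image, Sym2.exists, Subtype.exists, Sym2.map_mk, Set.mem_ofPred_eq,
      mem_edgeSet, comap_adj, Function.Embedding.subtype_apply, Sym2.mem_iff, forall_eq_or_imp,
      forall_eq, induce]
    constructor
    · rintro ⟨a, ha, b, hb, hab, h⟩
      rcases Sym2.eq_iff.1 h with ⟨rfl, rfl⟩ | ⟨rfl, rfl⟩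
      exacts [⟨hab, ha, hb⟩, ⟨hab.symm, hb, ha⟩]
    · rintro ⟨huw, hu, hw⟩
      exact ⟨u, hu, w, hw, huw, rfl⟩

end SimpleGraph

section EdgeOrder

variable {V : Type*} {G : SimpleGraph V} {lt : Sym2 V → Sym2 V → Prop}

theorem gbelow_adj {e : Sym2 V} {u w : V} :
    (Gbelow G lt e).Adj u w ↔ G.Adj u w ∧ lt s(u, w) e := by
  simp only [Gbelow, fromEdgeSet_adj, Set.mem_ofPred_eq, mem_edgeSet]
  exact ⟨And.left, fun h => ⟨h, h.1.ne⟩⟩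

theorem reachable_gbelow_of_not_isNegEdge {u w : V} (h : G.Adj u w)
    (hneg : ¬ IsNegEdge G lt s(u, w)) : (Gbelow G lt s(u, w)).Reachable u w :=
  by_contra fun hr => hneg ⟨h, u, w, rfl, hr⟩

variable (G lt) in
def negGraph : SimpleGraph V :=
  fromEdgeSet {e | IsNegEdge G lt e}

theorem negGraph_adj {u w : V} : (negGraph G lt).Adj u w ↔ IsNegEdge G lt s(u, w) := by
  rw [negGraph, fromEdgeSet_adj]
  exact ⟨And.left, fun h => ⟨h, G.ne_of_adj h.1⟩⟩

theorem edgeSet_negGraph : (negGraph G lt).edgeSet = {e | IsNegEdge G lt e} := by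
  rw [negGraph, edgeSet_fromEdgeSet, sdiff_eq_left, Set.disjoint_left]
  exact fun e hneg => G.not_isDiag_of_mem_edgeSet hneg.1

theorem isAcyclic_negGraph [Finite V] (hlt : IsStrictOrderOn G.edgeSet lt)
    (htotal : ∀ e₁ ∈ G.edgeSet, ∀ e₂ ∈ G.edgeSet, e₁ ≠ e₂ → lt e₁ e₂ ∨ lt e₂ e₁) :
    (negGraph G lt).IsAcyclic := by
  intro x c hc
  have hneg : ∀ e ∈ c.edges, IsNegEdge G lt e := fun e he => by
    simpa [edgeSet_negGraph] using c.edges_subset_edgeSet he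
  have hne : {e | e ∈ c.edges}.Nonempty := by
    cases c with
    | nil => exact absurd rfl hc.ne_nil
    | cons _ _ => exact ⟨_, List.mem_cons_self⟩
  obtain ⟨m, hm, hmax⟩ := hlt.exists_forall_lt htotal (fun e he => (hneg e he).1) hne
  obtain ⟨-, u, w, rfl, hnr⟩ := hneg _ hm
  exact hnr <| (hc.reachable_of_mem_edges hm).mono <|
    fromEdgeSet_mono fun e he => ⟨(hneg e he.1).1, hmax e he.1 he.2⟩

variable (G lt) in
def SpansInitialSegment (S : Set V) : Prop :=
  ∀ e ∈ G.edgeSet, ∀ e' ∈ G.edgeSet, lt e' e → (∀ v ∈ e, v ∈ S) → ∀ v ∈ e', v ∈ S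

theorem fbar_lt_iff {f : V → ℝ} {c : ℝ} {e : Sym2 V} : fbar f e < c ↔ ∀ v ∈ e, f v < c := by
  induction e with
  | _ u w => simp [fbar]

theorem spansInitialSegment_setOf_lt {f : V → ℝ} (hlt : IsStrictOrderOn G.edgeSet lt)
    (hrefine : ∀ e₁ ∈ G.edgeSet, ∀ e₂ ∈ G.edgeSet, fbar f e₁ < fbar f e₂ → lt e₁ e₂) (c : ℝ) :
    SpansInitialSegment G lt {v | f v < c} := by
  intro e he e' he' he'e hint
  simp only [Set.mem_ofPred_eq, ← fbar_lt_iff] at hint ⊢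
  by_contra hge
  exact hlt.irrefl e' he' <|
    hlt.trans e' he' e he e' he' he'e (hrefine e he e' he' (hint.trans_le (not_lt.1 hge)))

theorem reachable_induce_negGraph [Finite V] (hlt : IsStrictOrderOn G.edgeSet lt) {S : Set V}
    (hS : SpansInitialSegment G lt S) {a b : S} (hab : G.Adj a b) :
    ((negGraph G lt).induce S).Reachable a b := by
  suffices ∀ e : Sym2 V, ∀ a b : S, s(↑a, ↑b) = e → G.Adj a b →
      ((negGraph G lt).induce S).Reachable a b from this _ a b rfl hab
  intro e
  induction e using hlt.wellFounded.induction with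
  | _ e ih =>
  rintro a b rfl hab
  by_cases hneg : IsNegEdge G lt s(↑a, ↑b)
  · exact (induce_adj.2 (negGraph_adj.2 hneg)).reachable
  refine (reachable_gbelow_of_not_isNegEdge hab hneg).subtype_of_forall_adj fun x y hxy => ?_
  obtain ⟨hxy, hxy_lt⟩ := gbelow_adj.1 hxy
  have hxyS := hS _ hab _ hxy hxy_lt (by simp [a.2, b.2])
  exact ⟨hxyS x (Sym2.mem_mk_left x y), hxyS y (Sym2.mem_mk_right x y),
    ih _ ⟨hxy, hab, hxy_lt⟩ _ _ rfl hxy⟩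

theorem connected_induce_negGraph [Finite V] (hlt : IsStrictOrderOn G.edgeSet lt) {S : Set V}
    (hS : SpansInitialSegment G lt S) (hconn : (G.induce S).Connected) :
    ((negGraph G lt).induce S).Connected :=
  (connected_iff _).2 ⟨fun a b => (hconn.preconnected a b).of_forall_adj fun _ _ hxy =>
    reachable_induce_negGraph hlt hS hxy, hconn.nonempty⟩

theorem ncard_negEdges_add_one [Finite V] (hlt : IsStrictOrderOn G.edgeSet lt)
    (htotal : ∀ e₁ ∈ G.edgeSet, ∀ e₂ ∈ G.edgeSet, e₁ ≠ e₂ → lt e₁ e₂ ∨ lt e₂ e₁) {S : Set V}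
    (hS : SpansInitialSegment G lt S) (hconn : (G.induce S).Connected) :
    {e | IsNegEdge G lt e ∧ ∀ v ∈ e, v ∈ S}.ncard + 1 = S.ncard := by
  have htree : ((negGraph G lt).induce S).IsTree :=
    ⟨connected_induce_negGraph hlt hS hconn, (isAcyclic_negGraph hlt htotal).induce S⟩
  have hcard := (isTree_iff_connected_and_card.1 htree).2
  rwa [Nat.card_coe_set_eq, Nat.card_coe_set_eq, ncard_edgeSet_induce,
    edgeSet_negGraph] at hcard

theorem ncard_posEdges_add_ncard_negEdges [Finite V] (P : Sym2 V → Prop) :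
    {e | IsPosEdge G lt e ∧ P e}.ncard + {e | IsNegEdge G lt e ∧ P e}.ncard =
      {e | e ∈ G.edgeSet ∧ P e}.ncard := by
  rw [← Set.ncard_union_eq _ (Set.toFinite _) (Set.toFinite _)]
  · congr 1
    ext e
    simp only [IsPosEdge, Set.mem_union, Set.mem_ofPred_eq]
    by_cases hneg : IsNegEdge G lt e
    · simp [hneg, hneg.1]
    · simp [hneg]
  · exact Set.disjoint_left.2 fun e hpos hneg => hpos.1.2 hneg.1

end EdgeOrder

theorem positive_edges_count_betti_general {V : Type*} [Fintype V]
    (G : SimpleGraph V) (f : V → ℝ)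
    (lt : Sym2 V → Sym2 V → Prop)
    (hlt_irrefl : ∀ e ∈ G.edgeSet, ¬ lt e e)
    (hlt_trans : ∀ e₁ ∈ G.edgeSet, ∀ e₂ ∈ G.edgeSet, ∀ e₃ ∈ G.edgeSet,
      lt e₁ e₂ → lt e₂ e₃ → lt e₁ e₃)
    (hlt_total : ∀ e₁ ∈ G.edgeSet, ∀ e₂ ∈ G.edgeSet, e₁ ≠ e₂ → lt e₁ e₂ ∨ lt e₂ e₁)
    (hlt_refine : ∀ e₁ ∈ G.edgeSet, ∀ e₂ ∈ G.edgeSet, fbar f e₁ < fbar f e₂ → lt e₁ e₂)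
    (S : Set V) (β ν : ℝ) (hβν : 2 * ν < β) (hν : 0 ≤ ν)
    (hS : (G.induce S).Connected)
    (hfS : ∀ v ∈ S, f v ∈ Set.Icc (-β - ν) (-β))
    (hfSc : ∀ v : V, v ∉ S → f v ∈ Set.Icc (-ν) 0) :
    {e : Sym2 V | IsPosEdge G lt e ∧ ∀ v ∈ e, v ∈ S}.ncard + S.ncard =
      {e : Sym2 V | e ∈ G.edgeSet ∧ ∀ v ∈ e, v ∈ S}.ncard + 1 := by
  have hlt : IsStrictOrderOn G.edgeSet lt := ⟨hlt_irrefl, hlt_trans⟩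
  have hS_sublevel : S = {v | f v < -ν} := by
    ext v
    refine ⟨fun hv => show f v < -ν by linarith [(hfS v hv).2], fun hv => ?_⟩
    by_contra hvS
    exact (show ¬ f v < -ν by linarith [(hfSc v hvS).1]) hv
  have hinit : SpansInitialSegment G lt S :=
    hS_sublevel ▸ spansInitialSegment_setOf_lt hlt hlt_refine (-ν)
  have hneg := ncard_negEdges_add_one hlt hlt_total hinit hS
  have hsplit := ncard_posEdges_add_ncard_negEdges (G := G) (lt := lt) (fun e => ∀ v ∈ e, v ∈ S)
  omega

/-- Under the noise model, the number of positive edges with both endpoints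
in `S` equals `|E(G[S])| − |S| + 1`, the first Betti number of `G[S]` (stated additively to
avoid natural subtraction). -/
theorem positive_edges_count_betti {V : Type*} [Fintype V]
    (G : SimpleGraph V) (f : V → ℝ) (hf : Function.Injective f)
    (lt : Sym2 V → Sym2 V → Prop)
    (hlt_irrefl : ∀ e ∈ G.edgeSet, ¬ lt e e)
    (hlt_trans : ∀ e₁ ∈ G.edgeSet, ∀ e₂ ∈ G.edgeSet, ∀ e₃ ∈ G.edgeSet,
      lt e₁ e₂ → lt e₂ e₃ → lt e₁ e₃)
    (hlt_total : ∀ e₁ ∈ G.edgeSet, ∀ e₂ ∈ G.edgeSet, e₁ ≠ e₂ → lt e₁ e₂ ∨ lt e₂ e₁)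
    (hlt_refine : ∀ e₁ ∈ G.edgeSet, ∀ e₂ ∈ G.edgeSet, fbar f e₁ < fbar f e₂ → lt e₁ e₂)
    (S : Set V) (β ν : ℝ) (hβν : 2 * ν < β) (hν : 0 ≤ ν)
    (hG : G.Connected) (hS : (G.induce S).Connected)
    (hfS : ∀ v ∈ S, f v ∈ Set.Icc (-β - ν) (-β))
    (hfSc : ∀ v : V, v ∉ S → f v ∈ Set.Icc (-ν) 0) :
    {e : Sym2 V | IsPosEdge G lt e ∧ ∀ v ∈ e, v ∈ S}.ncard + S.ncard =
      {e : Sym2 V | e ∈ G.edgeSet ∧ ∀ v ∈ e, v ∈ S}.ncard + 1 :=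
  positive_edges_count_betti_general G f lt hlt_irrefl hlt_trans hlt_total hlt_refine S β ν hβν hν
    hS hfS hfSc
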